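/- In a finite network with a fixed environment and a stabilising diffusion f, a fixpoint assignment φ with φ(d) = min(s_d, min over neighbours d' of f(φ(d'), a_d)) for every device d is unique: any two assignments φ, ψ satisfying these fixpoint equations on the same finite graph with the same sources s_d and parameters a_d are equal. -/
import Mathlib


private lemma fixpoint_key {T A D : Type*} [LinearOrder T] [OrderTop T] [Fintype D]
    (N : D → Finset D) (s : D → T) (a : D → A) (f : T → A → T)
    (hmono : ∀ d : D, ∀ v v' : T, v ≤ v' → f v (a d) ≤ f v' (a d))
    (htop : ∀ d : D, f ⊤ (a d) = ⊤)
    (hprog : ∀ d : D, ∀ v : T, v ≠ ⊤ → v < f v (a d))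
    (φ ψ : D → T)
    (hφ : ∀ d : D, φ d = min (s d) ((N d).inf fun d' => f (φ d') (a d)))
    (hψ : ∀ d : D, ψ d = min (s d) ((N d).inf fun d' => f (ψ d') (a d)))
    (d : D) (hlt : φ d < ψ d)
    (hmin : ∀ d'' : D, φ d'' ≠ ψ d'' → min (φ d) (ψ d) ≤ min (φ d'') (ψ d'')) :
    False := by
  have hψs : ψ d ≤ s d := (hψ d) ▸ min_le_left _ _
  have hφlt_s : φ d < s d := lt_of_lt_of_le hlt hψs
  have hne : (N d).Nonempty := by
    by_contra h
    rw [Finset.not_nonempty_iff_eq_empty] at h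
    have := hφ d
    rw [h, Finset.inf_empty, min_eq_left le_top] at this
    exact absurd this (ne_of_lt hφlt_s)
  obtain ⟨d', hd'mem, hd'eq⟩ := Finset.exists_mem_eq_inf (N d) hne (fun d' => f (φ d') (a d))
  have hφd : φ d = f (φ d') (a d) := by
    have := hφ d
    rw [hd'eq] at this
    rcases min_cases (s d) (f (φ d') (a d)) with ⟨h1, _⟩ | ⟨h1, _⟩
    · exact absurd (this.trans h1) (ne_of_lt hφlt_s)
    · exact this.trans h1
  have hφd_ne_top : φ d ≠ ⊤ := ne_top_of_lt hlt
  have hφd'_ne_top : φ d' ≠ ⊤ := by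
    intro h
    exact hφd_ne_top (by rw [hφd, h, htop])
  have hstep : φ d' < φ d := hφd ▸ hprog d (φ d') hφd'_ne_top
  have hψle : ψ d ≤ f (ψ d') (a d) :=
    (hψ d) ▸ le_trans (min_le_right _ _) (Finset.inf_le hd'mem)
  have hd'lt : φ d' < ψ d' := by
    by_contra h
    push_neg at h
    have : f (ψ d') (a d) ≤ φ d := hφd ▸ hmono d _ _ h
    exact absurd (le_trans hψle this) (not_le_of_gt hlt)
  have := hmin d' (ne_of_lt hd'lt)
  rw [min_eq_left (le_of_lt hlt), min_eq_left (le_of_lt hd'lt)] at this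
  exact absurd (lt_of_le_of_lt this hstep) (lt_irrefl _)

/-- Uniqueness of the fixpoint assignment in a finite network with a fixed
environment and a stabilising diffusion: if f(·, a_d) is monotone and strictly
progressive for every device d, then any two assignments φ, ψ satisfying the
fixpoint equations φ(d) = min(s_d, min_{d' ∈ N(d)} f(φ(d'), a_d)) coincide. -/
theorem fixpoint_unique {T A D : Type*} [LinearOrder T] [OrderTop T] [Fintype D]
    (hnoeth : ¬ ∃ g : ℕ → T, StrictMono g)
    (N : D → Finset D) (s : D → T) (a : D → A) (f : T → A → T)
    (hmono : ∀ d : D, ∀ v v' : T, v ≤ v' → f v (a d) ≤ f v' (a d))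
    (htop : ∀ d : D, f ⊤ (a d) = ⊤)
    (hprog : ∀ d : D, ∀ v : T, v ≠ ⊤ → v < f v (a d))
    (φ ψ : D → T)
    (hφ : ∀ d : D, φ d = min (s d) ((N d).inf fun d' => f (φ d') (a d)))
    (hψ : ∀ d : D, ψ d = min (s d) ((N d).inf fun d' => f (ψ d') (a d))) :
    φ = ψ := by
  by_contra hne
  have hex : ∃ d : D, φ d ≠ ψ d := by
    by_contra h
    push_neg at h
    exact hne (funext h)
  classical
  obtain ⟨d0, hd0⟩ := hex
  obtain ⟨d, hdmem, hdmin⟩ := Finset.exists_min_image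
    (Finset.univ.filter fun d => φ d ≠ ψ d) (fun d => min (φ d) (ψ d))
    ⟨d0, Finset.mem_filter.mpr ⟨Finset.mem_univ _, hd0⟩⟩
  have hdne : φ d ≠ ψ d := (Finset.mem_filter.mp hdmem).2
  have hmin : ∀ d'' : D, φ d'' ≠ ψ d'' → min (φ d) (ψ d) ≤ min (φ d'') (ψ d'') := by
    intro d'' h
    exact hdmin d'' (Finset.mem_filter.mpr ⟨Finset.mem_univ _, h⟩)
  rcases lt_or_gt_of_ne hdne with h | h
  · exact fixpoint_key N s a f hmono htop hprog φ ψ hφ hψ d h hmin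
  · exact fixpoint_key N s a f hmono htop hprog ψ φ hψ hφ d h
      (fun d'' hd'' => by rw [min_comm (ψ d), min_comm (ψ d'')]; exact hmin d'' (Ne.symm hd''))
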